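/- Let F be a field with char F = 3, and let · be a bilinear multiplication on F × F that is not identically zero, is endo-commutative ((x·x)·(y·y) = (x·y)·(x·y) for all x, y) and is curled (for every x there exists λ ∈ F with x·x = λ • x). Then (F × F, ·) is isomorphic to exactly one of the following algebras, given by their matrices of structure constants: ((α1, 0, 0, 0), (0, 2α1−1, 1−α1, 0)) for some α1 ∈ F; or ((0, 1, 1, 0), (0, 0, 0, −1)). Here 'exactly one' means in addition that no two distinct algebras of this list (in particular for distinct values of α1) are isomorphic to each other. -/

import Mathlib

/-!
Away from characteristic 2, a curled bilinear multiplication on `F × F` is determined by a linear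
form `φ` and a vector `u`: `x·y = ½ (φ(x) y + φ(y) x) + det(x, y) u`, where `x·x = φ(x) x` and
`x·y - y·x = 2 det(x, y) u`. Then `(x·x)·(y·y) = φ(x) φ(y) (x·y)` while
`(x·y)·(x·y) = (φ(x) φ(y) + det(x, y) φ(u)) (x·y)`, so endo-commutativity forces `φ(u) = 0`.
In the basis `(v, w)` the same algebra has data `(φ ∘ P, det(v, w) P⁻¹ u)`, `P` the change of
basis. If `u ≠ 0`, the basis `(v, -u)` with `det(v, u) = -1` gives the member `α = φ(v)`; if
`u = 0` then `φ ≠ 0`, and a basis `(v, w)` with `φ(v) = 0`, `φ(w) = -1` gives the commutative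
member. Conversely every isomorphism transports `φ` and `u` in this way, which separates the
members: in characteristic 3 they have `u = (0, -1)` resp. `u = 0`, and `φ(e₁) = α`.
-/

/-- The bilinear multiplication on `F × F` determined by the matrix of structure
constants `((a1, a2, a3, a4), (b1, b2, b3, b4))`. -/
def scMul {F : Type*} [Field F] (a1 a2 a3 a4 b1 b2 b3 b4 : F) (x y : F × F) : F × F :=
  (a1 * x.1 * y.1 + a2 * x.1 * y.2 + a3 * x.2 * y.1 + a4 * x.2 * y.2,
   b1 * x.1 * y.1 + b2 * x.1 * y.2 + b3 * x.2 * y.1 + b4 * x.2 * y.2)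

/-- A multiplication `m` on `F × F` is endo-commutative if `(x·x)·(y·y) = (x·y)·(x·y)`. -/
def IsEndoCommutative {F : Type*} [Field F] (m : F × F → F × F → F × F) : Prop :=
  ∀ x y : F × F, m (m x x) (m y y) = m (m x y) (m x y)

/-- A multiplication `m` on `F × F` is curled if every square `x·x` is a scalar
multiple of `x`. -/
def IsCurled {F : Type*} [Field F] (m : F × F → F × F → F × F) : Prop :=
  ∀ x : F × F, ∃ lam : F, m x x = lam • x

/-- `m` is bilinear (linear in each argument). -/
def IsBilinearMul {F : Type*} [Field F] (m : F × F → F × F → F × F) : Prop :=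
  (∀ (a : F) (x x' y : F × F), m (a • x + x') y = a • m x y + m x' y) ∧
  (∀ (a : F) (x y y' : F × F), m x (a • y + y') = a • m x y + m x y')

/-- Two multiplications on `F × F` are isomorphic if some `F`-linear
equivalence `g` of `F × F` satisfies `g (x·y) = g x ∘ g y`. -/
def AlgIso {F : Type*} [Field F] (m₁ m₂ : F × F → F × F → F × F) : Prop :=
  ∃ g : (F × F) ≃ₗ[F] F × F, ∀ x y, g (m₁ x y) = m₂ (g x) (g y)

/-- The list of endo-commutative curled algebras (char F = 3):
`some a1` is `A₃,₃(a1, 0, 2a1 - 1)` and `none` is `A₁₁,₃(0)`. -/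
def ecCurledFamily3 {F : Type*} [Field F] : Option F → (F × F → F × F → F × F)
  | some a1 => scMul a1 0 0 0 0 (2 * a1 - 1) (1 - a1) 0
  | none => scMul 0 1 1 0 0 0 0 (-1)

section Bilinear

variable {F : Type*} [Field F]

theorem AlgIso.symm {m₁ m₂ : F × F → F × F → F × F} (h : AlgIso m₁ m₂) : AlgIso m₂ m₁ := by
  obtain ⟨g, hg⟩ := h
  refine ⟨g.symm, fun x y => g.injective ?_⟩
  simp only [hg, LinearEquiv.apply_symm_apply]

theorem AlgIso.trans {m₁ m₂ m₃ : F × F → F × F → F × F} (h : AlgIso m₁ m₂) (h' : AlgIso m₂ m₃) :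
    AlgIso m₁ m₃ := by
  obtain ⟨g, hg⟩ := h
  obtain ⟨g', hg'⟩ := h'
  exact ⟨g.trans g', fun x y => by simp only [LinearEquiv.trans_apply, hg, hg']⟩

theorem eq_fst_smul_add_snd_smul (x : F × F) :
    x = x.1 • ((1 : F), (0 : F)) + x.2 • ((0 : F), (1 : F)) := by
  ext <;> simp

theorem IsBilinearMul.eq_scMul {m : F × F → F × F → F × F} (hbil : IsBilinearMul m) :
    ∃ a1 a2 a3 a4 b1 b2 b3 b4 : F, m = scMul a1 a2 a3 a4 b1 b2 b3 b4 := by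
  obtain ⟨hL, hR⟩ := hbil
  have zero_left (y : F × F) : m 0 y = 0 := by simpa using hL 1 0 0 y
  have zero_right (x : F × F) : m x 0 = 0 := by simpa using hR 1 x 0 0
  have hL' (a b : F) (x x' y : F × F) : m (a • x + b • x') y = a • m x y + b • m x' y := by
    rw [hL]; simpa [zero_left] using hL b x' 0 y
  have hR' (a b : F) (x y y' : F × F) : m x (a • y + b • y') = a • m x y + b • m x y' := by
    rw [hR]; simpa [zero_right] using hR b x y' 0
  set e₁ : F × F := (1, 0)
  set e₂ : F × F := (0, 1)
  refine ⟨(m e₁ e₁).1, (m e₁ e₂).1, (m e₂ e₁).1, (m e₂ e₂).1,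
    (m e₁ e₁).2, (m e₁ e₂).2, (m e₂ e₁).2, (m e₂ e₂).2, funext₂ fun x y => ?_⟩
  rw [eq_fst_smul_add_snd_smul x, eq_fst_smul_add_snd_smul y, hL', hR', hR']
  ext <;> simp [scMul] <;> ring

end Bilinear

section Curled

variable {F : Type*} [Field F]

def det2 (x y : F × F) : F := x.1 * y.2 - x.2 * y.1

theorem det2_map (g : F × F →ₗ[F] F × F) (x y : F × F) :
    det2 (g x) (g y) = det2 (g (1, 0)) (g (0, 1)) * det2 x y := by
  rw [eq_fst_smul_add_snd_smul x, eq_fst_smul_add_snd_smul y]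
  simp only [map_add, map_smul, det2, Prod.fst_add, Prod.snd_add, Prod.smul_fst, Prod.smul_snd,
    smul_eq_mul]
  ring

/-- In characteristic 2 the factor `2⁻¹` is the junk value `0`. -/
def curledMul (φ : F × F →ₗ[F] F) (u : F × F) (x y : F × F) : F × F :=
  (2 : F)⁻¹ • (φ x • y + φ y • x) + det2 x y • u

variable {φ : F × F →ₗ[F] F} {u : F × F}

theorem curledMul_self (h2 : (2 : F) ≠ 0) (x : F × F) : curledMul φ u x x = φ x • x := by
  rw [curledMul, det2, mul_comm x.1, sub_self, zero_smul, add_zero, ← two_smul F, smul_smul,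
    inv_mul_cancel₀ h2, one_smul]

theorem curledMul_sub_swap (x y : F × F) :
    curledMul φ u x y - curledMul φ u y x = (2 * det2 x y) • u := by
  simp only [curledMul, det2, add_comm (φ x • y)]
  module

theorem curledMul_smul_smul (a b : F) (x y : F × F) :
    curledMul φ u (a • x) (b • y) = (a * b) • curledMul φ u x y := by
  simp only [curledMul, det2, map_smul, smul_eq_mul, Prod.smul_fst, Prod.smul_snd]
  module

theorem apply_curledMul (h2 : (2 : F) ≠ 0) (x y : F × F) :
    φ (curledMul φ u x y) = φ x * φ y + det2 x y * φ u := by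
  simp only [curledMul, map_add, map_smul, smul_eq_mul]
  field_simp
  ring

theorem apply_eq_zero_of_curledMul_isEndoCommutative (h2 : (2 : F) ≠ 0)
    (hec : IsEndoCommutative (curledMul φ u)) : φ u = 0 := by
  have key (x y : F × F) : (det2 x y * φ u) • curledMul φ u x y = 0 := by
    have h := hec x y
    rw [curledMul_self h2, curledMul_self h2, curledMul_self h2, curledMul_smul_smul,
      apply_curledMul h2, add_smul] at h
    exact left_eq_add.mp h
  by_contra hφu
  have h12 : curledMul φ u (1, 0) (0, 1) = 0 := by simpa [det2, hφu] using key (1, 0) (0, 1)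
  have h21 : curledMul φ u (0, 1) (1, 0) = 0 := by simpa [det2, hφu] using key (0, 1) (1, 0)
  have hu : (2 : F) • u = 0 := by
    simpa [h12, h21, det2] using (curledMul_sub_swap (φ := φ) (u := u) (1, 0) (0, 1)).symm
  exact hφu (by rw [(smul_eq_zero.mp hu).resolve_left h2, map_zero])

theorem IsCurled.exists_eq_curledMul (h2 : (2 : F) ≠ 0)
    {m : F × F → F × F → F × F} (hbil : IsBilinearMul m) (hcur : IsCurled m) :
    ∃ (φ : F × F →ₗ[F] F) (u : F × F), m = curledMul φ u := by
  obtain ⟨a1, a2, a3, a4, b1, b2, b3, b4, rfl⟩ := hbil.eq_scMul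
  obtain ⟨l₁, hc₁⟩ := hcur (1, 0)
  obtain ⟨l₂, hc₂⟩ := hcur (0, 1)
  obtain ⟨l₃, hc₃⟩ := hcur (1, 1)
  obtain ⟨l₄, hc₄⟩ := hcur (1, -1)
  simp only [scMul, Prod.smul_mk, smul_eq_mul, Prod.mk.injEq] at hc₁ hc₂ hc₃ hc₄
  norm_num at hc₁ hc₂ hc₃ hc₄
  obtain ⟨-, rfl⟩ := hc₁
  obtain ⟨rfl, -⟩ := hc₂
  obtain rfl : b3 = a1 - b2 := mul_left_cancel₀ h2 (by
    linear_combination hc₃.2 - hc₃.1 - hc₄.1 - hc₄.2)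
  obtain rfl : b4 = a2 + a3 := mul_left_cancel₀ h2 (by
    linear_combination hc₃.2 - hc₃.1 + hc₄.1 + hc₄.2)
  refine ⟨a1 • LinearMap.fst F F F + (a2 + a3) • LinearMap.snd F F F,
    (2⁻¹ * (a2 - a3), 2⁻¹ * (2 * b2 - a1)), funext₂ fun x y => ?_⟩
  ext <;> simp [scMul, curledMul, det2] <;> field_simp <;> ring

end Curled

section Normalize

variable {F : Type*} [Field F]

theorem curledMul_map (P : F × F →ₗ[F] F × F) {φ φ' : F × F →ₗ[F] F} {u u' : F × F}
    (hφ : φ ∘ₗ P = φ') (hu : P u' = det2 (P (1, 0)) (P (0, 1)) • u) (x y : F × F) :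
    curledMul φ u (P x) (P y) = P (curledMul φ' u' x y) := by
  subst hφ
  simp only [curledMul, map_add, map_smul, hu, det2_map P x y, LinearMap.comp_apply, smul_smul,
    mul_comm]

def frameMap (v w : F × F) : F × F →ₗ[F] F × F :=
  (LinearMap.fst F F F).smulRight v + (LinearMap.snd F F F).smulRight w

@[simp]
theorem frameMap_apply (v w x : F × F) : frameMap v w x = x.1 • v + x.2 • w := rfl

theorem frameMap_injective {v w : F × F} (h : det2 v w ≠ 0) :
    Function.Injective (frameMap v w) := by
  refine (injective_iff_map_eq_zero _).mpr fun x hx => ?_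
  have h₁ : x.1 * det2 v w = det2 (frameMap v w x) w := by simp [det2]; ring
  have h₂ : x.2 * det2 v w = det2 v (frameMap v w x) := by simp [det2]; ring
  simp only [hx, det2, Prod.fst_zero, Prod.snd_zero, mul_zero, zero_mul, sub_zero] at h₁ h₂
  exact Prod.ext ((mul_eq_zero.mp h₁).resolve_right h) ((mul_eq_zero.mp h₂).resolve_right h)

noncomputable def frameEquiv (v w : F × F) (h : det2 v w ≠ 0) : (F × F) ≃ₗ[F] F × F :=
  LinearEquiv.ofInjectiveEndo (frameMap v w) (frameMap_injective h)

theorem exists_det2_eq {u : F × F} (hu : u ≠ 0) (c : F) : ∃ v, det2 v u = c := by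
  by_cases h : u.2 = 0
  · have h' : u.1 ≠ 0 := fun h' => hu (Prod.ext h' h)
    exact ⟨(0, -c / u.1), by simp [det2]; field_simp⟩
  · exact ⟨(c / u.2, 0), by simp [det2]; field_simp⟩

theorem ecCurledFamily3_some (h3 : (3 : F) = 0) (α : F) :
    ecCurledFamily3 (some α) = curledMul (α • LinearMap.fst F F F) (0, -1) := by
  have h : (2 : F)⁻¹ = -1 := inv_eq_of_mul_eq_one_right (by linear_combination -h3)
  funext x y
  ext
  · simp [ecCurledFamily3, scMul, curledMul, det2, h]; linear_combination α * x.1 * y.1 * h3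
  · simp [ecCurledFamily3, scMul, curledMul, det2, h]; linear_combination α * x.1 * y.2 * h3

theorem ecCurledFamily3_none (h3 : (3 : F) = 0) :
    ecCurledFamily3 none = curledMul (-LinearMap.snd F F F) 0 := by
  have h : (2 : F)⁻¹ = -1 := inv_eq_of_mul_eq_one_right (by linear_combination -h3)
  funext x y
  ext
  · simp [ecCurledFamily3, scMul, curledMul, det2, h]; ring
  · simp [ecCurledFamily3, scMul, curledMul, det2, h]; linear_combination -x.2 * y.2 * h3

end Normalize

section Classification

variable {F : Type*} [Field F] {φ : F × F →ₗ[F] F} {u : F × F}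

theorem exists_algIso_ecCurledFamily3_some (h3 : (3 : F) = 0) (hφu : φ u = 0) (hu : u ≠ 0) :
    ∃ α, AlgIso (curledMul φ u) (ecCurledFamily3 (some α)) := by
  obtain ⟨v, hv⟩ := exists_det2_eq hu (-1)
  have hdet : det2 v (-u) = 1 := by
    rw [← neg_neg (1 : F), ← hv]
    simp only [det2, Prod.fst_neg, Prod.snd_neg]
    ring
  let P := frameEquiv v (-u) (by rw [hdet]; exact one_ne_zero)
  have hφP : φ ∘ₗ (P : F × F →ₗ[F] F × F) = φ v • LinearMap.fst F F F := by
    ext <;> simp [P, frameEquiv, hφu, mul_comm]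
  have hP : P (0, -1) = det2 (P (1, 0)) (P (0, 1)) • u := by
    simp [P, frameEquiv, hdet]
  refine ⟨φ v, AlgIso.symm ⟨P, fun x y => ?_⟩⟩
  rw [ecCurledFamily3_some h3]
  exact (curledMul_map (P : F × F →ₗ[F] F × F) hφP hP x y).symm

theorem algIso_ecCurledFamily3_none (h3 : (3 : F) = 0) (hφ : φ ≠ 0) :
    AlgIso (curledMul φ 0) (ecCurledFamily3 none) := by
  obtain ⟨w, hw⟩ := LinearMap.surjective hφ (-1)
  have hφ_apply (x : F × F) : φ x = x.1 * φ (1, 0) + x.2 * φ (0, 1) := by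
    have h := congrArg φ (eq_fst_smul_add_snd_smul x)
    rwa [map_add, map_smul, map_smul, smul_eq_mul, smul_eq_mul] at h
  -- `v` spans `ker φ`, and `det2 v w = φ w`
  set v : F × F := (φ (0, 1), -φ (1, 0))
  have hdet : det2 v w = -1 := by
    rw [← hw, hφ_apply w]
    simp only [det2, v]
    ring
  let P := frameEquiv v w (by rw [hdet]; exact neg_ne_zero.mpr one_ne_zero)
  have hφP : φ ∘ₗ (P : F × F →ₗ[F] F × F) = -LinearMap.snd F F F := by
    ext <;> simp [P, frameEquiv, hw, hφ_apply v, v, mul_comm]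
  refine AlgIso.symm ⟨P, fun x y => ?_⟩
  rw [ecCurledFamily3_none h3]
  exact (curledMul_map (P : F × F →ₗ[F] F × F) hφP (by simp) x y).symm

end Classification

section Invariants

variable {F : Type*} [Field F] {φ₁ φ₂ : F × F →ₗ[F] F} {u₁ u₂ : F × F}
  {g : (F × F) ≃ₗ[F] F × F}

theorem apply_map_eq_of_curledMul_iso (h2 : (2 : F) ≠ 0)
    (hg : ∀ x y, g (curledMul φ₁ u₁ x y) = curledMul φ₂ u₂ (g x) (g y)) (x : F × F) :
    φ₂ (g x) = φ₁ x := by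
  rcases eq_or_ne x 0 with rfl | hx
  · simp
  have h := hg x x
  rw [curledMul_self h2, curledMul_self h2, map_smul] at h
  exact (smul_left_injective F (g.map_ne_zero_iff.mpr hx) h).symm

theorem map_eq_det2_smul_of_curledMul_iso (h2 : (2 : F) ≠ 0)
    (hg : ∀ x y, g (curledMul φ₁ u₁ x y) = curledMul φ₂ u₂ (g x) (g y)) :
    g u₁ = det2 (g (1, 0)) (g (0, 1)) • u₂ := by
  have h := congrArg g (curledMul_sub_swap (φ := φ₁) (u := u₁) (1, 0) (0, 1))
  rw [map_sub, hg, hg, curledMul_sub_swap, map_smul] at h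
  simp only [det2, mul_one, mul_zero, sub_zero, mul_smul] at h
  exact smul_right_injective _ h2 h.symm

theorem two_ne_zero_of_three_eq_zero (h3 : (3 : F) = 0) : (2 : F) ≠ 0 := fun h2 =>
  one_ne_zero (by linear_combination h3 - h2 : (1 : F) = 0)

theorem not_algIso_ecCurledFamily3_some_none (h3 : (3 : F) = 0) (α : F) :
    ¬ AlgIso (ecCurledFamily3 (some α)) (ecCurledFamily3 none) := by
  rintro ⟨g, hg⟩
  rw [ecCurledFamily3_some h3, ecCurledFamily3_none h3] at hg
  have h := map_eq_det2_smul_of_curledMul_iso (two_ne_zero_of_three_eq_zero h3) hg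
  simp at h

theorem eq_of_algIso_ecCurledFamily3_some (h3 : (3 : F) = 0) {α β : F}
    (h : AlgIso (ecCurledFamily3 (some α)) (ecCurledFamily3 (some β))) : α = β := by
  obtain ⟨g, hg⟩ := h
  rw [ecCurledFamily3_some h3, ecCurledFamily3_some h3] at hg
  have h2 := two_ne_zero_of_three_eq_zero h3
  set d := det2 (g (1, 0)) (g (0, 1))
  have hge₂ : g (0, 1) = d • (0, 1) := by
    have h := map_eq_det2_smul_of_curledMul_iso h2 hg
    rw [show ((0 : F), (-1 : F)) = -((0 : F), (1 : F)) by simp, map_neg, neg_eq_iff_eq_neg] at h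
    simpa using h
  have hd : d ≠ 0 := by
    rintro hd
    simp [hd] at hge₂
  have hg₁ : (g (1, 0)).1 * d = d := by
    calc (g (1, 0)).1 * d = det2 (g (1, 0)) (d • (0, 1)) := by simp [det2]
      _ = d := by rw [← hge₂]
  simpa [(mul_eq_right₀ hd).mp hg₁] using (apply_map_eq_of_curledMul_iso h2 hg (1, 0)).symm

theorem ecCurledFamily3_pairwise_not_algIso (h3 : (3 : F) = 0) :
    ∀ i j : Option F, i ≠ j → ¬ AlgIso (ecCurledFamily3 i) (ecCurledFamily3 j)
  | some _, some _, hne, h => hne (congrArg some (eq_of_algIso_ecCurledFamily3_some h3 h))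
  | some α, none, _, h => not_algIso_ecCurledFamily3_some_none h3 α h
  | none, some α, _, h => not_algIso_ecCurledFamily3_some_none h3 α h.symm
  | none, none, hne, _ => hne rfl

end Invariants

/-- over a field of characteristic 3, any nonzero bilinear
endo-commutative curled multiplication on `F × F` is isomorphic to exactly one
member of `ecCurledFamily3`, and the members of `ecCurledFamily3` are pairwise
non-isomorphic. -/
theorem stmt_19 {F : Type*} [Field F] (h3 : ringChar F = 3)
    (m : F × F → F × F → F × F) (hbil : IsBilinearMul m)
    (hnz : ¬ ∀ x y, m x y = 0)
    (hec : ∀ x y : F × F, m (m x x) (m y y) = m (m x y) (m x y))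
    (hcur : IsCurled m) :
    (∃! i : Option F, AlgIso m (ecCurledFamily3 i)) ∧
      ∀ i j : Option F, i ≠ j → ¬ AlgIso (ecCurledFamily3 i) (ecCurledFamily3 j) := by
  have h3' : (3 : F) = 0 := by exact_mod_cast h3 ▸ ringChar.Nat.cast_ringChar
  have h2 := two_ne_zero_of_three_eq_zero h3'
  obtain ⟨φ, u, rfl⟩ := hcur.exists_eq_curledMul h2 hbil
  have hφu : φ u = 0 := apply_eq_zero_of_curledMul_isEndoCommutative h2 hec
  have hpair := ecCurledFamily3_pairwise_not_algIso h3'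
  obtain ⟨i, hi⟩ : ∃ i, AlgIso (curledMul φ u) (ecCurledFamily3 i) := by
    rcases eq_or_ne u 0 with rfl | hu
    · refine ⟨none, algIso_ecCurledFamily3_none h3' fun hφ => hnz fun x y => ?_⟩
      simp [curledMul, hφ]
    · obtain ⟨α, hα⟩ := exists_algIso_ecCurledFamily3_some h3' hφu hu
      exact ⟨some α, hα⟩
  exact ⟨⟨i, hi, fun j hj =>
    Classical.byContradiction fun hne => hpair j i hne (hj.symm.trans hi)⟩, hpair⟩
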